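/- If a graph G' is obtained from a graph G by adding edges each of whose endpoints lie in distinct connected components of G, and each added edge shares no endpoint with another added edge in a way that creates a path between the endpoints of any single added edge within G plus the other added edges arranged linearly across components, then G' can be partitioned into triangles if and only if G can. More precisely: let G have connected components G₁,…,G_l, pick vertices v_i¹, v_i² in G_i, and let G' = G plus the edges {v_i², v_{i+1}¹} for 1 ≤ i ≤ l−1; then G' admits a partition of its vertex set into pairwise-adjacent triples iff G does. -/

import Mathlib

/-! ## Hypergraphs (over a label alphabet `Λ`), bonding, breaking bonds,
bonding grammars, following "Bonding Grammars" (Pshenitsyn). -/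

structure PHypergraph (Λ : Type) where
  V : Finset ℕ
  E : Finset ℕ
  att : ℕ → List ℕ
  lab : ℕ → Λ

namespace PHypergraph

variable {Λ : Type}

/-- Attachment vertices lie in `V` and attachment lengths agree with types. -/
def WellFormed (typ : Λ → ℕ) (H : PHypergraph Λ) : Prop :=
  (∀ e ∈ H.E, ∀ v ∈ H.att e, v ∈ H.V) ∧
  (∀ e ∈ H.E, (H.att e).length = typ (H.lab e))

def Adj (H : PHypergraph Λ) (u v : ℕ) : Prop :=
  ∃ e ∈ H.E, u ∈ H.att e ∧ v ∈ H.att e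

/-- There is a path between `u` and `v` in `H`. -/
def HasPath (H : PHypergraph Λ) (u v : ℕ) : Prop :=
  Relation.ReflTransGen H.Adj u v

def Connected (H : PHypergraph Λ) : Prop :=
  ∀ u ∈ H.V, ∀ v ∈ H.V, H.HasPath u v

/-- The degree of a vertex: the number of pairs `(e, i)` with
`att e ( i ) = v`, i.e. occurrences of `v` in attachment sequences. -/
def degree (H : PHypergraph Λ) (v : ℕ) : ℕ :=
  ∑ e ∈ H.E, (H.att e).count v

def degreeSet (H : PHypergraph Λ) : Set ℕ :=
  {d | ∃ v ∈ H.V, H.degree v = d}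

def Isomorphic (H G : PHypergraph Λ) : Prop :=
  ∃ f g : ℕ → ℕ,
    Set.BijOn f ↑H.V ↑G.V ∧ Set.BijOn g ↑H.E ↑G.E ∧
    ∀ e ∈ H.E, G.att (g e) = (H.att e).map f ∧ G.lab (g e) = H.lab e

end PHypergraph

/-- A single bonding step: two distinct hyperedges `e₁, e₂` whose labels can be
bonded are merged into a single new hyperedge `e'` with concatenated
attachment sequence and label `lab e₁ ⊗ lab e₂`. -/
def BondingStep {Λ : Type} (bond : Λ → Λ → Option Λ) (H H' : PHypergraph Λ) : Prop :=
  ∃ e₁ e₂ e' t,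
    e₁ ∈ H.E ∧ e₂ ∈ H.E ∧ e₁ ≠ e₂ ∧ e' ∉ H.E ∧
    bond (H.lab e₁) (H.lab e₂) = some t ∧
    H'.V = H.V ∧
    H'.E = (H.E \ {e₁, e₂}) ∪ {e'} ∧
    (∀ e ∈ H.E \ {e₁, e₂}, H'.att e = H.att e ∧ H'.lab e = H.lab e) ∧
    H'.att e' = H.att e₁ ++ H.att e₂ ∧
    H'.lab e' = t

/-- Breaking the bond `e'` (whose label is `A₁ ⊗ A₂`) of `H'`, introducing the
fresh hyperedges `e₁, e₂`, yields `H`. -/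
def BreakBondAt {Λ : Type} (typ : Λ → ℕ) (bond : Λ → Λ → Option Λ)
    (H' H : PHypergraph Λ) (e' e₁ e₂ : ℕ) : Prop :=
  ∃ A₁ A₂,
    e' ∈ H'.E ∧ e₁ ∉ H'.E ∧ e₂ ∉ H'.E ∧ e₁ ≠ e₂ ∧
    bond A₁ A₂ = some (H'.lab e') ∧
    H.V = H'.V ∧
    H.E = (H'.E \ {e'}) ∪ {e₁, e₂} ∧
    (∀ e ∈ H'.E \ {e'}, H.att e = H'.att e ∧ H.lab e = H'.lab e) ∧
    H.att e₁ = (H'.att e').take (typ A₁) ∧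
    H.att e₂ = (H'.att e').drop (typ A₁) ∧
    H.lab e₁ = A₁ ∧ H.lab e₂ = A₂

def BreakBond {Λ : Type} (typ : Λ → ℕ) (bond : Λ → Λ → Option Λ)
    (H' H : PHypergraph Λ) : Prop :=
  ∃ e' e₁ e₂, BreakBondAt typ bond H' H e' e₁ e₂

/-- `BreaksTo typ bond H l F`: starting from `H` and successively breaking the
bonds listed in `l` yields `F`. -/
def BreaksTo {Λ : Type} (typ : Λ → ℕ) (bond : Λ → Λ → Option Λ) :
    PHypergraph Λ → List ℕ → PHypergraph Λ → Prop
  | H, [], F => H = F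
  | H, e :: l, F => ∃ H₁ e₁ e₂, BreakBondAt typ bond H H₁ e e₁ e₂ ∧ BreaksTo typ bond H₁ l F

/-- `H` is a disjoint union of copies of hypergraphs from `Zs`
(this plays the role of `m · Z`). -/
def IsUnionOfCopies {Λ : Type} (Zs : Set (PHypergraph Λ)) (H : PHypergraph Λ) : Prop :=
  ∃ (n : ℕ) (cV cE : ℕ → ℕ),
    (∀ v ∈ H.V, cV v < n) ∧ (∀ e ∈ H.E, cE e < n) ∧
    (∀ e ∈ H.E, ∀ v ∈ H.att e, v ∈ H.V) ∧
    (∀ e ∈ H.E, ∀ v ∈ H.att e, cV v = cE e) ∧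
    ∀ i < n, ∃ Z0 ∈ Zs, PHypergraph.Isomorphic
      ⟨H.V.filter (fun v => cV v = i), H.E.filter (fun e => cE e = i), H.att, H.lab⟩ Z0

/-- `C` is a connected component of `H`. -/
def IsComponent {Λ : Type} (H C : PHypergraph Λ) : Prop :=
  C.V ⊆ H.V ∧ C.att = H.att ∧ C.lab = H.lab ∧ C.V.Nonempty ∧
  (∀ u ∈ C.V, ∀ v ∈ H.V, (H.HasPath u v ↔ v ∈ C.V)) ∧
  ∀ e, e ∈ C.E ↔ (e ∈ H.E ∧ ∃ v ∈ H.att e, v ∈ C.V)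

/-- Disjoint union of two hypergraphs (via an even/odd renaming). -/
def hsum {Λ : Type} (H K : PHypergraph Λ) : PHypergraph Λ :=
  ⟨H.V.image (fun v => 2 * v) ∪ K.V.image (fun v => 2 * v + 1),
   H.E.image (fun e => 2 * e) ∪ K.E.image (fun e => 2 * e + 1),
   fun e => if e % 2 = 0 then (H.att (e / 2)).map (fun v => 2 * v)
            else (K.att (e / 2)).map (fun v => 2 * v + 1),
   fun e => if e % 2 = 0 then H.lab (e / 2) else K.lab (e / 2)⟩

/-- A bonding grammar: typed labels, nonterminal and terminal alphabets, a
partial bond function, and a tuple `Z` of start hypergraphs. -/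
structure BondingGrammar (Λ : Type) where
  typ : Λ → ℕ
  N : Set Λ
  T : Set Λ
  bond : Λ → Λ → Option Λ
  k : ℕ
  Z : Fin k → PHypergraph Λ

namespace BondingGrammar

variable {Λ : Type}

/-- Side conditions from the definition of a bonding grammar: `N` and `T` are
disjoint, the start hypergraphs are connected and well-formed, and the bond
function is a partial injective function `N × N ⇀ T` adding the types. -/
def WellFormed (G : BondingGrammar Λ) : Prop :=
  Disjoint G.N G.T ∧
  (∀ i, (G.Z i).Connected ∧ (G.Z i).WellFormed G.typ) ∧
  (∀ A₁ A₂ t, G.bond A₁ A₂ = some t →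
    A₁ ∈ G.N ∧ A₂ ∈ G.N ∧ t ∈ G.T ∧ G.typ t = G.typ A₁ + G.typ A₂) ∧
  (∀ A₁ A₂ B₁ B₂ t, G.bond A₁ A₂ = some t → G.bond B₁ B₂ = some t →
    A₁ = B₁ ∧ A₂ = B₂)

def ZSet (G : BondingGrammar Λ) : Set (PHypergraph Λ) :=
  {Z0 | ∃ i, Z0 = G.Z i}

/-- `G` generates `H` if some `m · Z` derives `H` by bonding steps. -/
def Generates (G : BondingGrammar Λ) (H : PHypergraph Λ) : Prop :=
  ∃ H₀, IsUnionOfCopies G.ZSet H₀ ∧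
    Relation.ReflTransGen (BondingStep G.bond) H₀ H

/-- The language of `G`: generated hypergraphs all of whose labels are terminal. -/
def Lang (G : BondingGrammar Λ) : Set (PHypergraph Λ) :=
  {H | G.Generates H ∧ ∀ e ∈ H.E, H.lab e ∈ G.T}

end BondingGrammar

/-! Finite undirected graphs, given by a Boolean adjacency function, and
partitions into triangles. -/

/-- `TriPart adj`: the vertex set can be partitioned into 3-element sets of
pairwise adjacent vertices. -/
def TriPart {n : ℕ} (adj : Fin n → Fin n → Bool) : Prop :=
  ∃ P : Finset (Finset (Fin n)),
    (∀ t ∈ P, t.card = 3 ∧ ∀ u ∈ t, ∀ v ∈ t, u ≠ v → adj u v = true) ∧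
    ∀ v : Fin n, ∃! t, t ∈ P ∧ v ∈ t

/-- A graph instance: a number of vertices together with an adjacency function. -/
def GraphInst : Type := Σ n : ℕ, Fin n → Fin n → Bool

/-- The adjacency function is symmetric and irreflexive (simple undirected graph). -/
def GoodGraph (x : GraphInst) : Prop :=
  (∀ u v, x.2 u v = x.2 v u) ∧ (∀ v, x.2 v v = false)

def degLe (x : GraphInst) (k : ℕ) : Prop :=
  ∀ v, (Finset.univ.filter (fun u => x.2 v u = true)).card ≤ k

def ConnG (x : GraphInst) : Prop :=
  ∀ u v : Fin x.1, Relation.ReflTransGen (fun a b => x.2 a b = true) u v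

/-- Partition into triangles for graphs of maximum degree 4 (NP-complete by
van Rooij et al.). -/
def PiT4 (x : GraphInst) : Prop :=
  GoodGraph x ∧ degLe x 4 ∧ TriPart x.2

/-- Problem 5Conn-PiT: partition into triangles for connected graphs of
maximum degree at most 5. -/
def PiT5conn (x : GraphInst) : Prop :=
  GoodGraph x ∧ ConnG x ∧ degLe x 5 ∧ TriPart x.2


/-! Adding edges keeps every partition into triangles. Conversely, a triangle of `G'` cannot
meet two components of `G`: its vertices would lie in two consecutive components, joined in `G'`
by a single edge, and one vertex would be incident to two edges between them. So it is a
triangle of `G`. -/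

def IsTriangle {α : Type*} (adj : α → α → Bool) (t : Finset α) : Prop :=
  t.card = 3 ∧ ∀ u ∈ t, ∀ v ∈ t, u ≠ v → adj u v = true

/-- The levels `f` will be the components of `G`, and `lo i — hi (i + 1)` the only edge allowed
between levels `i` and `i + 1`. -/
def IsLevelStep {α : Type*} {l : ℕ} (f : α → Fin l) (lo hi : Fin l → α) (u v : α) : Prop :=
  (f v : ℕ) = f u + 1 ∧ u = lo (f u) ∧ v = hi (f v)

def IsChainEdge {n l : ℕ} (v1 v2 : Fin l → Fin n) (u v : Fin n) : Prop :=
  ∃ i j : Fin l, (j : ℕ) = (i : ℕ) + 1 ∧ ((u = v2 i ∧ v = v1 j) ∨ (u = v1 j ∧ v = v2 i))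

theorem Finset.exists_mem_ne_ne {α : Type*} {s : Finset α} (hs : 2 < s.card) (u v : α) :
    ∃ w ∈ s, w ≠ u ∧ w ≠ v := by
  classical
  have hcard : 1 < (s.erase u).card := by
    have := Finset.pred_card_le_card_erase (s := s) (a := u)
    omega
  obtain ⟨w, hw, hwv⟩ := Finset.exists_mem_ne hcard v
  exact ⟨w, Finset.mem_of_mem_erase hw, Finset.ne_of_mem_erase hw, hwv⟩

namespace IsTriangle

variable {α : Type*} {adj adj' : α → α → Bool} {t : Finset α}

theorem mono (ht : IsTriangle adj t) (h : ∀ u v, adj u v = true → adj' u v = true) :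
    IsTriangle adj' t :=
  ⟨ht.1, fun u hu v hv huv => h u v (ht.2 u hu v hv huv)⟩

theorem level_eq {l : ℕ} (ht : IsTriangle adj t) (f : α → Fin l) (lo hi : Fin l → α)
    (hadj : ∀ u v, adj u v = true →
      f u = f v ∨ IsLevelStep f lo hi u v ∨ IsLevelStep f lo hi v u)
    {u v : α} (hu : u ∈ t) (hv : v ∈ t) : f u = f v := by
  by_contra hne
  have huv : u ≠ v := fun h => hne (congrArg f h)
  have hedge : ∀ a ∈ t, ∀ b ∈ t, a ≠ b →
      f a = f b ∨ IsLevelStep f lo hi a b ∨ IsLevelStep f lo hi b a :=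
    fun a ha b hb hab => hadj a b (ht.2 a ha b hb hab)
  wlog hstep : IsLevelStep f lo hi u v generalizing u v
  · exact this hv hu (Ne.symm hne) huv.symm
      (((hedge u hu v hv huv).resolve_left hne).resolve_left hstep)
  obtain ⟨hsucc, hlo, hhi⟩ := hstep
  obtain ⟨w, hw, hwu, hwv⟩ := Finset.exists_mem_ne_ne (by rw [ht.1]; decide) u v
  rcases hedge w hw v hv hwv with hwv' | ⟨hs, hw_lo, -⟩ | ⟨hs, -, -⟩
  · rcases hedge u hu w hw hwu.symm with huw | ⟨-, -, hw_hi⟩ | ⟨hs, -, -⟩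
    · exact hne (huw.trans hwv')
    · exact hwv (hw_hi.trans (hwv' ▸ hhi.symm))
    · omega
  · have hwu' : f w = f u := Fin.ext (by omega)
    exact hwu (hw_lo.trans (hwu' ▸ hlo.symm))
  · rcases hedge u hu w hw hwu.symm with huw | ⟨hs', -, -⟩ | ⟨hs', -, -⟩ <;> omega

end IsTriangle

theorem TriPart.of_forall_isTriangle {n : ℕ} {adj adj' : Fin n → Fin n → Bool}
    (h : ∀ t, IsTriangle adj t → IsTriangle adj' t) : TriPart adj → TriPart adj' :=
  fun ⟨P, hP, hcover⟩ => ⟨P, fun t ht => h t (hP t ht), hcover⟩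

theorem IsLevelStep.ne {α : Type*} {l : ℕ} {f : α → Fin l} {lo hi : Fin l → α} {u v : α}
    (h : IsLevelStep f lo hi u v) : f u ≠ f v := by
  have := h.1
  omega

section ChainedComponents

variable {n l : ℕ} {adj adj' : Fin n → Fin n → Bool} {comp : Fin n → Fin l}
  {v1 v2 : Fin l → Fin n}

theorem IsChainEdge.isLevelStep (hv1 : ∀ i, comp (v1 i) = i) (hv2 : ∀ i, comp (v2 i) = i)
    {u v : Fin n} (h : IsChainEdge v1 v2 u v) :
    IsLevelStep comp v2 v1 u v ∨ IsLevelStep comp v2 v1 v u := by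
  obtain ⟨i, j, hij, ⟨rfl, rfl⟩ | ⟨rfl, rfl⟩⟩ := h
  · exact .inl ⟨by rw [hv1, hv2, hij], by rw [hv2], by rw [hv1]⟩
  · exact .inr ⟨by rw [hv1, hv2, hij], by rw [hv2], by rw [hv1]⟩

theorem comp_eq_or_isLevelStep_of_adj' (hc : ∀ u v, adj u v = true → comp u = comp v)
    (hadj' : ∀ u v, adj' u v = true → adj u v = true ∨ IsChainEdge v1 v2 u v)
    (hv1 : ∀ i, comp (v1 i) = i) (hv2 : ∀ i, comp (v2 i) = i) {u v : Fin n}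
    (h : adj' u v = true) :
    comp u = comp v ∨ IsLevelStep comp v2 v1 u v ∨ IsLevelStep comp v2 v1 v u :=
  (hadj' u v h).imp (hc u v) (·.isLevelStep hv1 hv2)

theorem adj_of_adj'_of_comp_eq
    (hadj' : ∀ u v, adj' u v = true → adj u v = true ∨ IsChainEdge v1 v2 u v)
    (hv1 : ∀ i, comp (v1 i) = i) (hv2 : ∀ i, comp (v2 i) = i) {u v : Fin n}
    (h : adj' u v = true) (heq : comp u = comp v) : adj u v = true :=
  (hadj' u v h).resolve_right fun hchain =>
    (hchain.isLevelStep hv1 hv2).elim (·.ne heq) (·.ne heq.symm)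

end ChainedComponents

theorem connectify_triangle_partition_general (n l : ℕ)
    (adj adj' : Fin n → Fin n → Bool)
    (comp : Fin n → Fin l)
    (hcomp : ∀ u v : Fin n,
      Relation.ReflTransGen (fun a b : Fin n => adj a b = true) u v ↔ comp u = comp v)
    (v1 v2 : Fin l → Fin n)
    (hv1 : ∀ i, comp (v1 i) = i) (hv2 : ∀ i, comp (v2 i) = i)
    (hadj' : ∀ u v, adj' u v = true ↔
      (adj u v = true ∨ ∃ i j : Fin l, (j : ℕ) = (i : ℕ) + 1 ∧
        ((u = v2 i ∧ v = v1 j) ∨ (u = v1 j ∧ v = v2 i)))) :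
    TriPart adj' ↔ TriPart adj := by
  have hc : ∀ u v, adj u v = true → comp u = comp v := fun u v h => (hcomp u v).1 (.single h)
  have hadj'_cases : ∀ u v, adj' u v = true → adj u v = true ∨ IsChainEdge v1 v2 u v :=
    fun u v => (hadj' u v).1
  refine ⟨TriPart.of_forall_isTriangle fun t ht => ⟨ht.1, fun u hu v hv huv => ?_⟩,
    TriPart.of_forall_isTriangle fun t ht => ht.mono fun u v h => (hadj' u v).2 (.inl h)⟩
  have hlevel : comp u = comp v :=
    ht.level_eq comp v2 v1
      (fun _ _ => comp_eq_or_isLevelStep_of_adj' hc hadj'_cases hv1 hv2) hu hv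
  exact adj_of_adj'_of_comp_eq hadj'_cases hv1 hv2 (ht.2 u hu v hv huv) hlevel

/-- let `G` (adjacency `adj`) have connected components indexed by
`Fin l` via `comp`, pick vertices `v1 i, v2 i` in the `i`-th component, and let
`G'` (adjacency `adj'`) be `G` plus the chain edges `{v2 i, v1 (i+1)}` for
consecutive components. Then `G'` admits a partition into triangles iff `G` does. -/
theorem connectify_triangle_partition (n l : ℕ)
    (adj adj' : Fin n → Fin n → Bool)
    (hsymm : ∀ u v, adj u v = adj v u) (hirr : ∀ v, adj v v = false)
    (comp : Fin n → Fin l)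
    (hcomp : ∀ u v : Fin n,
      Relation.ReflTransGen (fun a b : Fin n => adj a b = true) u v ↔ comp u = comp v)
    (v1 v2 : Fin l → Fin n)
    (hv1 : ∀ i, comp (v1 i) = i) (hv2 : ∀ i, comp (v2 i) = i)
    (hadj' : ∀ u v, adj' u v = true ↔
      (adj u v = true ∨ ∃ i j : Fin l, (j : ℕ) = (i : ℕ) + 1 ∧
        ((u = v2 i ∧ v = v1 j) ∨ (u = v1 j ∧ v = v2 i)))) :
    TriPart adj' ↔ TriPart adj :=
  connectify_triangle_partition_general n l adj adj' comp hcomp v1 v2 hv1 hv2 hadj'
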